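/- arXiv:quant-ph/0303061 — 3 statements merged into one kernel-verified Lean document; each statement's English description precedes it below -/
import Mathlib

section
/- Let {σ'_k} be an orthogonal basis of traceless Hermitian N×N matrices (tr(σ'_iσ'_j) = 2δ_ij) and let V = Σ_k v_k σ'_k ⊗ τ'_k with v_k ≥ 0, where τ'_k are orthonormal-type traceless Hermitian M×M matrices. If tr_B[V, σ'_l ⊗ τ'_m] = 0 for all l, m, then V = 0. -/
/-!
Tracing out `B` from `[V, σ'_l ⊗ τ'_k]` leaves `2 v_k [σ'_k, σ'_l]`, because the `τ'` are
trace-orthonormal. So if `v_k ≠ 0`, then `σ'_k` commutes with every `σ'_l`. The identity together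
with the `N² - 1` matrices `σ'_l` is trace-orthogonal, hence a basis of all `N × N` matrices;
thus `σ'_k` is central, i.e. scalar, and being traceless it is `0`, contradicting `tr σ'_k² = 2`.
-/

open Matrix Kronecker Complex BigOperators

/-- Partial trace over the second (B) factor. -/
noncomputable def ptraceB {m n : Type*} [Fintype n] (C : Matrix (m × n) (m × n) ℂ) :
    Matrix m m ℂ :=
  fun i j => ∑ k, C (i, k) (j, k)

/-- Partial trace over the first (A) factor. -/
noncomputable def ptraceA {m n : Type*} [Fintype m] (C : Matrix (m × n) (m × n) ℂ) :
    Matrix n n ℂ :=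
  fun i j => ∑ k, C (k, i) (k, j)

section PartialTrace

variable {m n : Type*} [Fintype n]

noncomputable def ptraceBLinearMap : Matrix (m × n) (m × n) ℂ →ₗ[ℂ] Matrix m m ℂ where
  toFun := ptraceB
  map_add' A B := by ext; simp [ptraceB, Finset.sum_add_distrib]
  map_smul' c A := by ext; simp [ptraceB, Finset.mul_sum]

lemma ptraceB_sub (A B : Matrix (m × n) (m × n) ℂ) : ptraceB (A - B) = ptraceB A - ptraceB B :=
  map_sub ptraceBLinearMap A B

lemma ptraceB_smul (c : ℂ) (A : Matrix (m × n) (m × n) ℂ) : ptraceB (c • A) = c • ptraceB A :=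
  map_smul ptraceBLinearMap c A

lemma ptraceB_sum {ι : Type*} (s : Finset ι) (A : ι → Matrix (m × n) (m × n) ℂ) :
    ptraceB (∑ i ∈ s, A i) = ∑ i ∈ s, ptraceB (A i) :=
  map_sum ptraceBLinearMap A s

lemma ptraceB_kronecker (A : Matrix m m ℂ) (B : Matrix n n ℂ) :
    ptraceB (A ⊗ₖ B) = B.trace • A := by
  ext i j
  simp [ptraceB, Matrix.trace, Finset.mul_sum, mul_comm]

lemma ptraceB_lie_kronecker [Fintype m] (A C : Matrix m m ℂ) (B D : Matrix n n ℂ) :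
    ptraceB ⁅A ⊗ₖ B, C ⊗ₖ D⁆ = (B * D).trace • ⁅A, C⁆ := by
  rw [Ring.lie_def, Ring.lie_def, ← mul_kronecker_mul, ← mul_kronecker_mul, ptraceB_sub,
    ptraceB_kronecker, ptraceB_kronecker, trace_mul_comm D, smul_sub]

lemma ptraceB_lie_sum_kronecker_orthonormal {ι κ : Type*} [Fintype ι] [DecidableEq κ]
    [Fintype m]
    (c : ι → ℂ) (A : ι → Matrix m m ℂ) (C : Matrix m m ℂ) (τ : κ → Matrix n n ℂ)
    (hτo : ∀ k l, (τ k * τ l).trace = if k = l then 2 else 0)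
    {e : ι → κ} (he : Function.Injective e) (j : ι) :
    ptraceB ⁅∑ k, c k • (A k ⊗ₖ τ (e k)), C ⊗ₖ τ (e j)⁆ = (2 * c j) • ⁅A j, C⁆ := by
  have hterm : ∀ k, ptraceB (c k • (A k ⊗ₖ τ (e k)) * (C ⊗ₖ τ (e j)) -
      (C ⊗ₖ τ (e j)) * (c k • (A k ⊗ₖ τ (e k)))) =
        (c k * if e k = e j then 2 else 0) • ⁅A k, C⁆ :=
    fun k => by
      rw [smul_mul_assoc, mul_smul_comm, ← smul_sub, ← Ring.lie_def, ptraceB_smul,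
        ptraceB_lie_kronecker, hτo, smul_smul]
  rw [Ring.lie_def, Finset.sum_mul, Finset.mul_sum, ← Finset.sum_sub_distrib, ptraceB_sum,
    Finset.sum_eq_single j]
  · rw [hterm, if_pos rfl, mul_comm]
  · intro k _ hkj
    rw [hterm, if_neg (he.ne hkj), mul_zero, zero_smul]
  · exact fun hj => absurd (Finset.mem_univ j) hj

end PartialTrace

section TraceForm

variable {K n ι : Type*} [Field K] [Fintype n]

variable (K n) in
noncomputable def traceForm : LinearMap.BilinForm K (Matrix n n K) :=
  (LinearMap.mul K (Matrix n n K)).compr₂ (traceLinearMap n K K)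

lemma traceForm_apply (A B : Matrix n n K) : traceForm K n A B = (A * B).trace :=
  rfl

variable [DecidableEq n]

lemma linearIndependent_option_elim_one [CharZero K] [Nonempty n] [DecidableEq ι]
    (σ : ι → Matrix n n K)
    (hσt : ∀ i, (σ i).trace = 0) (hσo : ∀ i j, (σ i * σ j).trace = if i = j then 2 else 0) :
    LinearIndependent K fun o : Option ι => o.elim 1 σ := by
  refine LinearMap.BilinForm.linearIndependent_of_iIsOrtho (B := traceForm K n) ?_ ?_
  · rintro (_ | i) (_ | j) hij <;> simp_all [Function.onFun, traceForm_apply]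
  · rintro (_ | i) <;> simp [traceForm_apply, hσo]

lemma span_option_elim_one_eq_top [CharZero K] [Fintype ι] [DecidableEq ι]
    (σ : ι → Matrix n n K)
    (hσt : ∀ i, (σ i).trace = 0) (hσo : ∀ i j, (σ i * σ j).trace = if i = j then 2 else 0)
    (hcard : Fintype.card ι + 1 = Fintype.card n ^ 2) :
    Submodule.span K (Set.range fun o : Option ι => o.elim 1 σ) = ⊤ := by
  have : Nonempty n := Fintype.card_pos_iff.mp <| Nat.pos_of_ne_zero fun h0 => by
    simp [h0] at hcard
  refine (linearIndependent_option_elim_one σ hσt hσo).span_eq_top_of_card_eq_finrank ?_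
  rw [Module.finrank_matrix, Module.finrank_self, Fintype.card_option, hcard]
  ring

lemma eq_zero_of_trace_eq_zero_of_commute [CharZero K] {X : Matrix n n K} (hX : X.trace = 0)
    {s : Set (Matrix n n K)} (hs : Submodule.span K s = ⊤) (hc : ∀ Y ∈ s, Commute X Y) :
    X = 0 := by
  have hcentral : X ∈ Set.center (Matrix n n K) :=
    Semigroup.mem_center_iff.mpr fun Y =>
      (Commute.span_right hc Y (hs ▸ Submodule.mem_top)).symm
  obtain ⟨c, rfl⟩ := center_eq_range (n := n) (R := K) ▸ hcentral
  rw [scalar_apply, trace_diagonal, Finset.sum_const, Finset.card_univ, nsmul_eq_mul,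
    mul_eq_zero, Nat.cast_eq_zero, Fintype.card_eq_zero_iff] at hX
  rcases hX with hn | rfl
  · exact Subsingleton.elim _ _
  · exact map_zero _

end TraceForm

theorem diagonal_interaction_vanishes_general {N M : ℕ} (hN : 2 ≤ N)
    (σ : Fin (N ^ 2 - 1) → Matrix (Fin N) (Fin N) ℂ)
    (τ : Fin (M ^ 2 - 1) → Matrix (Fin M) (Fin M) ℂ)
    (hσt : ∀ i, (σ i).trace = 0)
    (hσo : ∀ i j, (σ i * σ j).trace = if i = j then 2 else 0)
    (hτo : ∀ k l, (τ k * τ l).trace = if k = l then 2 else 0)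
    (v : Fin (min N M ^ 2 - 1) → ℝ)
    (h : ∀ (l : Fin (N ^ 2 - 1)) (m : Fin (M ^ 2 - 1)),
      ptraceB ⁅∑ k, (v k : ℂ) •
          (σ (Fin.castLE (Nat.sub_le_sub_right (Nat.pow_le_pow_left (min_le_left N M) 2) 1) k) ⊗ₖ
           τ (Fin.castLE (Nat.sub_le_sub_right (Nat.pow_le_pow_left (min_le_right N M) 2) 1) k)),
        σ l ⊗ₖ τ m⁆ = 0) :
    ∑ k, (v k : ℂ) •
        (σ (Fin.castLE (Nat.sub_le_sub_right (Nat.pow_le_pow_left (min_le_left N M) 2) 1) k) ⊗ₖ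
         τ (Fin.castLE (Nat.sub_le_sub_right (Nat.pow_le_pow_left (min_le_right N M) 2) 1) k)) = 0 := by
  set cN := Fin.castLE (Nat.sub_le_sub_right (Nat.pow_le_pow_left (min_le_left N M) 2) 1)
  set cM := Fin.castLE (Nat.sub_le_sub_right (Nat.pow_le_pow_left (min_le_right N M) 2) 1)
  suffices hv : ∀ k, v k = 0 by simp [hv]
  intro k₀
  by_contra hk₀
  have hcomm : ∀ l, Commute (σ (cN k₀)) (σ l) := fun l => by
    have hl := h l (cM k₀)
    rw [ptraceB_lie_sum_kronecker_orthonormal _ _ _ τ hτo (Fin.castLE_injective _)] at hl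
    exact commute_iff_lie_eq.mpr ((smul_eq_zero.mp hl).resolve_left (by simpa using hk₀))
  have hcard : Fintype.card (Fin (N ^ 2 - 1)) + 1 = Fintype.card (Fin N) ^ 2 := by
    simpa using Nat.sub_add_cancel (Nat.one_le_pow 2 N (by omega))
  have hzero : σ (cN k₀) = 0 :=
    eq_zero_of_trace_eq_zero_of_commute (hσt _) (span_option_elim_one_eq_top σ hσt hσo hcard)
      (by rintro _ ⟨_ | l, rfl⟩; exacts [Commute.one_right _, hcomm l])
  simpa [hzero] using hσo (cN k₀) (cN k₀)

theorem diagonal_interaction_vanishes {N M : ℕ} (hN : 2 ≤ N) (hM : 2 ≤ M)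
    (σ : Fin (N ^ 2 - 1) → Matrix (Fin N) (Fin N) ℂ)
    (τ : Fin (M ^ 2 - 1) → Matrix (Fin M) (Fin M) ℂ)
    (hσh : ∀ i, (σ i).IsHermitian) (hσt : ∀ i, (σ i).trace = 0)
    (hσo : ∀ i j, (σ i * σ j).trace = if i = j then 2 else 0)
    (hτh : ∀ k, (τ k).IsHermitian) (hτt : ∀ k, (τ k).trace = 0)
    (hτo : ∀ k l, (τ k * τ l).trace = if k = l then 2 else 0)
    (v : Fin (min N M ^ 2 - 1) → ℝ) (hv : ∀ k, 0 ≤ v k)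
    (h : ∀ (l : Fin (N ^ 2 - 1)) (m : Fin (M ^ 2 - 1)),
      ptraceB ⁅∑ k, (v k : ℂ) •
          (σ (Fin.castLE (Nat.sub_le_sub_right (Nat.pow_le_pow_left (min_le_left N M) 2) 1) k) ⊗ₖ
           τ (Fin.castLE (Nat.sub_le_sub_right (Nat.pow_le_pow_left (min_le_right N M) 2) 1) k)),
        σ l ⊗ₖ τ m⁆ = 0) :
    ∑ k, (v k : ℂ) •
        (σ (Fin.castLE (Nat.sub_le_sub_right (Nat.pow_le_pow_left (min_le_left N M) 2) 1) k) ⊗ₖ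
         τ (Fin.castLE (Nat.sub_le_sub_right (Nat.pow_le_pow_left (min_le_right N M) 2) 1) k)) = 0 :=
  diagonal_interaction_vanishes_general hN σ τ hσt hσo hτo v h
end

section
/- Let V be a Hermitian operator on ℂ^N ⊗ ℂ^M whose expansion contains only σ_i ⊗ τ_j terms (no identity components on either factor). If tr_B[V, C] = 0 for every operator C on ℂ^N ⊗ ℂ^M with tr_B C = 0 and tr_A C = 0, then V = 0. -/
open Matrix Kronecker Complex BigOperators

section aux
variable {N M : ℕ}

/-- `A ⊗ I` as an explicit matrix. -/
noncomputable def extA (M : ℕ) (A : Matrix (Fin N) (Fin N) ℂ) :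
    Matrix (Fin N × Fin M) (Fin N × Fin M) ℂ :=
  fun p q => A p.1 q.1 * (if p.2 = q.2 then 1 else 0)

lemma extA_mul_apply (A : Matrix (Fin N) (Fin N) ℂ)
    (V : Matrix (Fin N × Fin M) (Fin N × Fin M) ℂ) (p q : Fin N × Fin M) :
    (extA M A * V) p q = ∑ m, A p.1 m * V (m, p.2) q := by
  rw [Matrix.mul_apply, Fintype.sum_prod_type]
  refine Finset.sum_congr rfl fun m _ => ?_
  simp [extA, mul_ite, ite_mul]

lemma mul_extA_apply (A : Matrix (Fin N) (Fin N) ℂ)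
    (V : Matrix (Fin N × Fin M) (Fin N × Fin M) ℂ) (p q : Fin N × Fin M) :
    (V * extA M A) p q = ∑ m, V p (m, q.2) * A m q.1 := by
  rw [Matrix.mul_apply, Fintype.sum_prod_type]
  refine Finset.sum_congr rfl fun m _ => ?_
  simp [extA, mul_ite, ite_mul, eq_comm]

lemma ptraceB_comm_extA (A : Matrix (Fin N) (Fin N) ℂ)
    (V : Matrix (Fin N × Fin M) (Fin N × Fin M) ℂ) (hB : ptraceB V = 0) :
    ptraceB (extA M A * V - V * extA M A) = 0 := by
  funext i j
  have h1 : ∀ m, (∑ k, V (m, k) (j, k)) = 0 := fun m => congrFun (congrFun hB m) j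
  have h2 : ∀ m, (∑ k, V (i, k) (m, k)) = 0 := fun m => congrFun (congrFun hB i) m
  simp only [ptraceB, Matrix.sub_apply, extA_mul_apply, mul_extA_apply, Finset.sum_sub_distrib,
    Pi.zero_apply, Matrix.zero_apply]
  rw [Finset.sum_comm, Finset.sum_comm (γ := Fin M)]
  simp [← Finset.mul_sum, ← Finset.sum_mul, h1, h2]

lemma ptraceA_comm_extA (A : Matrix (Fin N) (Fin N) ℂ)
    (V : Matrix (Fin N × Fin M) (Fin N × Fin M) ℂ) :
    ptraceA (extA M A * V - V * extA M A) = 0 := by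
  funext a b
  simp only [ptraceA, Matrix.sub_apply, extA_mul_apply, mul_extA_apply, Finset.sum_sub_distrib,
    Pi.zero_apply, Matrix.zero_apply]
  rw [sub_eq_zero, Finset.sum_comm]
  refine Finset.sum_congr rfl fun m _ => Finset.sum_congr rfl fun k _ => mul_comm _ _

lemma ptraceB_conjTranspose (X : Matrix (Fin N × Fin M) (Fin N × Fin M) ℂ) :
    ptraceB Xᴴ = (ptraceB X)ᴴ := by
  funext i j
  simp [ptraceB, Matrix.conjTranspose_apply, map_sum]

lemma ptraceA_conjTranspose (X : Matrix (Fin N × Fin M) (Fin N × Fin M) ℂ) :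
    ptraceA Xᴴ = (ptraceA X)ᴴ := by
  funext i j
  simp [ptraceA, Matrix.conjTranspose_apply, map_sum]

end aux

section aux2
variable {N M : ℕ}

/-- standard basis matrix -/
noncomputable def Ek (k l : Fin N) : Matrix (Fin N) (Fin N) ℂ :=
  fun i j => if i = k ∧ j = l then 1 else 0

lemma trace_extA_Ek_mul (k l : Fin N) (D : Matrix (Fin N × Fin M) (Fin N × Fin M) ℂ) :
    Matrix.trace (extA M (Ek k l) * D) = ptraceB D l k := by
  rw [Matrix.trace, ptraceB]
  rw [show Matrix.diag (extA M (Ek k l) * D) = fun p => (extA M (Ek k l) * D) p p from rfl]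
  rw [Fintype.sum_prod_type]
  simp only [extA_mul_apply, Ek, ite_mul, one_mul, zero_mul]
  simp [ite_and, Finset.sum_ite_eq, Finset.sum_ite_eq']

lemma matrix_eq_zero_of_trace_mul_conjTranspose
    {p : Type*} [Fintype p] [DecidableEq p] (W : Matrix p p ℂ)
    (h : Matrix.trace (W * Wᴴ) = 0) : W = 0 := by
  have h1 : Matrix.trace (W * Wᴴ) = ((∑ i, ∑ j, Complex.normSq (W i j) : ℝ) : ℂ) := by
    rw [Matrix.trace]
    push_cast
    refine Finset.sum_congr rfl fun i _ => ?_
    rw [Matrix.diag_apply, Matrix.mul_apply]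
    refine Finset.sum_congr rfl fun j _ => ?_
    rw [Matrix.conjTranspose_apply, ← Complex.mul_conj]
    rfl
  rw [h1, Complex.ofReal_eq_zero] at h
  have h2 : ∀ i ∈ Finset.univ, ∀ j ∈ Finset.univ, Complex.normSq (W i j) = 0 := by
    intro i _ j _
    have := (Finset.sum_eq_zero_iff_of_nonneg (fun i _ =>
      Finset.sum_nonneg fun j _ => Complex.normSq_nonneg (W i j))).mp h i (Finset.mem_univ i)
    exact (Finset.sum_eq_zero_iff_of_nonneg fun j _ => Complex.normSq_nonneg _).mp this j
      (Finset.mem_univ j)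
  funext i j
  exact Complex.normSq_eq_zero.mp (h2 i (Finset.mem_univ i) j (Finset.mem_univ j))

end aux2

theorem interaction_vanishes_of_ptraceB_commutator {N M : ℕ} (hN : 2 ≤ N) (hM : 2 ≤ M)
    (V : Matrix (Fin N × Fin M) (Fin N × Fin M) ℂ) (hherm : V.IsHermitian)
    (hA : ptraceA V = 0) (hB : ptraceB V = 0)
    (h : ∀ C : Matrix (Fin N × Fin M) (Fin N × Fin M) ℂ,
      ptraceB C = 0 → ptraceA C = 0 → ptraceB ⁅V, C⁆ = 0) :
    V = 0 := by
  have key : ∀ k l : Fin N,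
      extA M (Ek k l) * V - V * extA M (Ek k l) = 0 := by
    intro k l
    set X := extA M (Ek k l) with hX
    set W := X * V - V * X with hW
    have hWB : ptraceB W = 0 := ptraceB_comm_extA _ V hB
    have hWA : ptraceA W = 0 := ptraceA_comm_extA _ V
    have hCB : ptraceB Wᴴ = 0 := by rw [ptraceB_conjTranspose, hWB]; simp
    have hCA : ptraceA Wᴴ = 0 := by rw [ptraceA_conjTranspose, hWA]; simp
    have hcomm := h Wᴴ hCB hCA
    have hlie : ⁅V, Wᴴ⁆ = V * Wᴴ - Wᴴ * V := Ring.lie_def V Wᴴ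
    have htr : Matrix.trace (W * Wᴴ) = 0 := by
      have e1 : W * Wᴴ = X * (V * Wᴴ) - (V * X) * Wᴴ := by
        rw [hW, sub_mul, Matrix.mul_assoc]
      have e2 : Matrix.trace ((V * X) * Wᴴ) = Matrix.trace (X * (Wᴴ * V)) := by
        rw [Matrix.trace_mul_cycle, ← Matrix.mul_assoc, Matrix.trace_mul_cycle]
      rw [e1, Matrix.trace_sub, e2, ← Matrix.trace_sub, ← Matrix.mul_sub, ← hlie,
        trace_extA_Ek_mul, hcomm]
      rfl
    exact matrix_eq_zero_of_trace_mul_conjTranspose W htr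
  -- Entrywise consequence: for all k l j a b, V (l,a) (j,b) = if j = l then V (k,a) (k,b) else 0
  have key2 : ∀ (k l j : Fin N) (a b : Fin M),
      V (l, a) (j, b) = if j = l then V (k, a) (k, b) else 0 := by
    intro k l j a b
    have hk := congrFun (congrFun (key k l) (k, a)) (j, b)
    simp only [Matrix.sub_apply, Matrix.zero_apply, sub_eq_zero, extA_mul_apply,
      mul_extA_apply, Ek, ite_mul, mul_ite, one_mul, mul_one, zero_mul, mul_zero] at hk
    simpa [ite_and, Finset.sum_ite_eq, Finset.sum_ite_eq'] using hk
  funext p q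
  obtain ⟨l, a⟩ := p
  obtain ⟨j, b⟩ := q
  rcases eq_or_ne j l with rfl | hjl
  · -- diagonal block: all V (k,a)(k,b) equal, and their sum is zero
    have hsum : (∑ k, V (k, a) (k, b)) = 0 := congrFun (congrFun hA a) b
    have hconst : ∀ k : Fin N, V (k, a) (k, b) = V (j, a) (j, b) := by
      intro k
      have := key2 k j j a b
      simpa using this.symm
    rw [Finset.sum_congr rfl (fun k _ => hconst k), Finset.sum_const, Finset.card_univ,
      Fintype.card_fin, nsmul_eq_mul] at hsum
    have hN0 : (N : ℂ) ≠ 0 := Nat.cast_ne_zero.mpr (by omega)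
    simpa [hN0] using hsum
  · have := key2 l l j a b
    simpa [hjl] using this
end

section
/- For any real (N²−1)×(M²−1) matrix v and orthogonal bases {σ_i}, {τ_j} of traceless Hermitian matrices, there exist new orthogonal bases {σ'_i}, {τ'_j} (obtained by real orthogonal transformations of the original ones, hence still traceless Hermitian with tr(σ'_iσ'_j)=2δ_ij) such that V = Σ_{ij} v_{ij} σ_i ⊗ τ_j = Σ_{k=1}^{L²−1} v_k σ'_k ⊗ τ'_k with v_k ≥ 0, where L = min(N,M). -/
open Matrix Kronecker Complex BigOperators

/-!
Write the coefficient matrix as `v i j = ∑ₖ wₖ P k i Q k j` with `P`, `Q` orthogonal and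
`wₖ ≥ 0` (a real singular value decomposition); then `σ'ₖ = ∑ᵢ P k i σᵢ` and `τ'ₖ = ∑ⱼ Q k j τⱼ`
are again traceless, Hermitian and trace-orthonormal, and bilinearity of `⊗ₖ` turns `V` into
`∑ₖ wₖ σ'ₖ ⊗ τ'ₖ`.

For the decomposition of a linear map `T`, take an orthonormal eigenbasis `e` of `T†T`. The
vectors `T eᵢ` are pairwise orthogonal with norms the singular values, and vanish once `i` exceeds
the rank of `T`; normalizing the nonzero ones and completing them gives an orthonormal basis `f`
of the codomain with `T eᵢ = sᵢ fᵢ`.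
-/

open Module InnerProductSpace

section
variable {𝕜 : Type*} [RCLike 𝕜] {E : Type*} [NormedAddCommGroup E] [InnerProductSpace 𝕜 E]
  [FiniteDimensional 𝕜 E]

theorem exists_orthonormalBasis_eq_norm_smul {ι : Type*} [Fintype ι]
    (hcard : finrank 𝕜 E = Fintype.card ι) {b : ι → E}
    (hb : Pairwise fun i j => ⟪b i, b j⟫_𝕜 = 0) :
    ∃ f : OrthonormalBasis ι 𝕜 E, ∀ i, b i = (‖b i‖ : 𝕜) • f i := by
  let s : Set ι := {i | b i ≠ 0}
  have hon : Orthonormal 𝕜 (s.domRestrict fun i => (‖b i‖ : 𝕜)⁻¹ • b i) := by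
    refine ⟨fun i => norm_smul_inv_norm i.2, fun i j hij => ?_⟩
    simp only [Set.domRestrict_apply, inner_smul_left, inner_smul_right,
      hb (Subtype.coe_ne_coe.mpr hij), mul_zero]
  obtain ⟨f, hf⟩ := hon.exists_orthonormalBasis_extension_of_card_eq hcard
  refine ⟨f, fun i => ?_⟩
  by_cases hi : b i = 0
  · simp [hi]
  · rw [hf i hi, smul_smul, mul_inv_cancel₀ (by simpa using hi), one_smul]

end

namespace LinearMap

variable {𝕜 : Type*} [RCLike 𝕜]
  {E : Type*} [NormedAddCommGroup E] [InnerProductSpace 𝕜 E] [FiniteDimensional 𝕜 E]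
  {F : Type*} [NormedAddCommGroup F] [InnerProductSpace 𝕜 F] [FiniteDimensional 𝕜 F]
  (T : E →ₗ[𝕜] F) {m n : ℕ}

theorem inner_apply_eigenvectorBasis_adjoint_comp_self (hm : finrank 𝕜 E = m) (i j : Fin m) :
    ⟪T (T.isSymmetric_adjoint_comp_self.eigenvectorBasis hm i),
      T (T.isSymmetric_adjoint_comp_self.eigenvectorBasis hm j)⟫_𝕜 =
      if i = j then (T.singularValues i : 𝕜) ^ 2 else 0 := by
  rw [← adjoint_inner_right, ← comp_apply, LinearMap.IsSymmetric.apply_eigenvectorBasis,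
    inner_smul_right, orthonormal_iff_ite.mp (OrthonormalBasis.orthonormal _)]
  split_ifs with h
  · subst h
    rw [mul_one, ← RCLike.ofReal_pow, T.sq_singularValues_fin hm]
  · rw [mul_zero]

theorem norm_apply_eigenvectorBasis_adjoint_comp_self (hm : finrank 𝕜 E = m) (i : Fin m) :
    ‖T (T.isSymmetric_adjoint_comp_self.eigenvectorBasis hm i)‖ = T.singularValues i := by
  have h := T.inner_apply_eigenvectorBasis_adjoint_comp_self hm i i
  rw [if_pos rfl, inner_self_eq_norm_sq_to_K, ← RCLike.ofReal_pow, ← RCLike.ofReal_pow,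
    RCLike.ofReal_inj] at h
  exact (sq_eq_sq₀ (norm_nonneg _) (T.singularValues_nonneg i)).mp h

theorem singularValues_eq_zero_of_finrank_le {i : ℕ} (hi : finrank 𝕜 F ≤ i) :
    T.singularValues i = 0 :=
  T.singularValues_eq_zero_iff_le_finrank_range.mpr ((Submodule.finrank_le _).trans hi)

theorem exists_orthonormalBasis_apply_eq_singularValues_smul
    (hm : finrank 𝕜 E = m) (hn : finrank 𝕜 F = n) :
    ∃ (e : OrthonormalBasis (Fin m) 𝕜 E) (f : OrthonormalBasis (Fin n) 𝕜 F),
      (∀ (i : Fin m) (j : Fin n), (i : ℕ) = j → T (e i) = (T.singularValues i : 𝕜) • f j) ∧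
      ∀ i : Fin m, n ≤ i → T (e i) = 0 := by
  set e := T.isSymmetric_adjoint_comp_self.eigenvectorBasis hm
  let b : Fin n → F := fun j => if h : (j : ℕ) < m then T (e ⟨j, h⟩) else 0
  have hb : Pairwise fun i j => ⟪b i, b j⟫_𝕜 = 0 := by
    intro i j hij
    simp only [b]
    split_ifs
    · rw [T.inner_apply_eigenvectorBasis_adjoint_comp_self hm, if_neg]
      simpa [Fin.ext_iff] using hij
    all_goals simp
  obtain ⟨f, hf⟩ := exists_orthonormalBasis_eq_norm_smul (by simpa using hn) hb
  refine ⟨e, f, fun i j hij => ?_, fun i hi => ?_⟩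
  · have hbj : b j = T (e i) := by simp [b, ← hij]
    rw [← hbj, hf j, hbj, T.norm_apply_eigenvectorBasis_adjoint_comp_self hm]
  · rw [← norm_eq_zero, T.norm_apply_eigenvectorBasis_adjoint_comp_self hm,
      T.singularValues_eq_zero_of_finrank_le (hn.trans_le hi)]

/-- `p` stands for `min m n`; it is pinned down by inequalities so that no cast between `Fin p` and
`Fin (min m n)` is needed. -/
theorem exists_orthonormalBasis_apply_eq_sum (hm : finrank 𝕜 E = m) (hn : finrank 𝕜 F = n)
    {p : ℕ} (hpm : p ≤ m) (hpn : p ≤ n) (hp : min m n ≤ p) :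
    ∃ (e : OrthonormalBasis (Fin m) 𝕜 E) (f : OrthonormalBasis (Fin n) 𝕜 F), ∀ x,
      T x = ∑ k : Fin p,
        ((T.singularValues k : 𝕜) * ⟪e (Fin.castLE hpm k), x⟫_𝕜) • f (Fin.castLE hpn k) := by
  obtain ⟨e, f, hef, hzero⟩ := T.exists_orthonormalBasis_apply_eq_singularValues_smul hm hn
  refine ⟨e, f, fun x => ?_⟩
  conv_lhs => rw [← e.sum_repr' x, map_sum]
  refine (Fintype.sum_of_injective (Fin.castLE hpm) (Fin.castLE_injective hpm) _ _
    (fun i hi => ?_) (fun k => ?_)).symm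
  · have hpi : p ≤ i := by
      by_contra! h
      exact hi ⟨⟨i, h⟩, rfl⟩
    rw [map_smul, hzero i (by omega), smul_zero]
  · rw [map_smul, hef _ (Fin.castLE hpn k) rfl, smul_smul, mul_comm]
    rfl

end LinearMap

theorem OrthonormalBasis.of_apply_mem_unitaryGroup {𝕜 ι : Type*} [RCLike 𝕜] [Fintype ι]
    [DecidableEq ι] (b : OrthonormalBasis ι 𝕜 (EuclideanSpace 𝕜 ι)) :
    Matrix.of (fun i j => b i j) ∈ Matrix.unitaryGroup ι 𝕜 := by
  rw [← Matrix.transpose_mem_unitaryGroup_iff]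
  convert (EuclideanSpace.basisFun ι 𝕜).toMatrix_orthonormalBasis_mem_unitary b using 1
  ext i j
  simp [Basis.toMatrix_apply]

theorem Matrix.exists_mem_orthogonalGroup_apply_eq_sum {m n p : ℕ} (A : Matrix (Fin n) (Fin m) ℝ)
    (hpn : p ≤ n) (hpm : p ≤ m) (hp : min n m ≤ p) :
    ∃ (P : Matrix (Fin n) (Fin n) ℝ) (Q : Matrix (Fin m) (Fin m) ℝ) (w : Fin p → ℝ),
      P ∈ orthogonalGroup (Fin n) ℝ ∧ Q ∈ orthogonalGroup (Fin m) ℝ ∧ (∀ k, 0 ≤ w k) ∧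
      ∀ i j, A i j = ∑ k, w k * P (Fin.castLE hpn k) i * Q (Fin.castLE hpm k) j := by
  obtain ⟨e, f, hA⟩ := (toEuclideanLin A).exists_orthonormalBasis_apply_eq_sum
    finrank_euclideanSpace_fin finrank_euclideanSpace_fin hpm hpn (by rwa [min_comm])
  refine ⟨Matrix.of (fun i j => f i j), Matrix.of (fun i j => e i j), _,
    f.of_apply_mem_unitaryGroup, e.of_apply_mem_unitaryGroup,
    fun k => (toEuclideanLin A).singularValues_nonneg k, fun i j => ?_⟩
  simpa [EuclideanSpace.inner_single_right, mul_comm, mul_left_comm] using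
    congrArg (· i) (hA (EuclideanSpace.single j 1))

theorem Matrix.sum_smul_kronecker_eq_sum_smul_kronecker {ι κ ν n n' : Type*} [Fintype ι]
    [Fintype κ] [Fintype ν] (σ : ι → Matrix n n ℂ) (τ : κ → Matrix n' n' ℂ) (v : ι → κ → ℝ)
    (w : ν → ℝ) (a : ν → ι → ℝ) (b : ν → κ → ℝ)
    (hv : ∀ i j, v i j = ∑ k, w k * a k i * b k j) :
    ∑ i, ∑ j, (v i j : ℂ) • (σ i ⊗ₖ τ j) =
      ∑ k, (w k : ℂ) • ((∑ i, (a k i : ℂ) • σ i) ⊗ₖ (∑ j, (b k j : ℂ) • τ j)) := by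
  have hkron : ∀ (X : Matrix n n ℂ) (Y : Matrix n' n' ℂ),
      X ⊗ₖ Y = kroneckerBilinear (R := ℂ) X Y := fun _ _ => rfl
  simp only [hkron, map_sum, map_smul, LinearMap.sum_apply, LinearMap.smul_apply, hv,
    Complex.ofReal_sum, Complex.ofReal_mul, Finset.sum_smul, Finset.smul_sum, smul_smul]
  refine (Finset.sum_congr rfl fun i _ => Finset.sum_comm).trans (Finset.sum_comm.trans ?_)
  refine Finset.sum_congr rfl fun k _ => Finset.sum_comm.trans
    (Finset.sum_congr rfl fun j _ => Finset.sum_congr rfl fun i _ => by congr 1; ring)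

theorem Matrix.IsHermitian.sum_ofReal_smul {ι n : Type*} [Fintype ι] {σ : ι → Matrix n n ℂ}
    (hσ : ∀ i, (σ i).IsHermitian) (c : ι → ℝ) : (∑ i, (c i : ℂ) • σ i).IsHermitian :=
  isSelfAdjoint_sum _ fun i _ =>
    (show IsSelfAdjoint (c i : ℂ) from Complex.conj_ofReal _).smul (hσ i)

theorem Matrix.trace_sum_smul_eq_zero {ι n : Type*} [Fintype ι] [Fintype n]
    {σ : ι → Matrix n n ℂ} (hσ : ∀ i, (σ i).trace = 0) (c : ι → ℂ) :
    (∑ i, c i • σ i).trace = 0 := by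
  simp [trace_sum, trace_smul, hσ]

theorem Matrix.trace_mul_eq_ite_of_mem_orthogonalGroup {ι n : Type*} [Fintype ι] [Fintype n]
    [DecidableEq ι] {σ : ι → Matrix n n ℂ} {c : ℂ}
    (hσ : ∀ i j, (σ i * σ j).trace = if i = j then c else 0)
    {O : Matrix ι ι ℝ} (hO : O ∈ orthogonalGroup ι ℝ) (i j : ι) :
    ((∑ a, (O i a : ℂ) • σ a) * ∑ b, (O j b : ℂ) • σ b).trace = if i = j then c else 0 := by
  have hOO : ∑ a, O i a * O j a = if i = j then 1 else 0 := by
    simpa [mul_apply, one_apply] using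
      congrFun (congrFun ((mem_orthogonalGroup_iff ι ℝ).mp hO) i) j
  simp only [Finset.sum_mul, Finset.mul_sum, smul_mul_smul_comm, trace_sum, trace_smul, hσ,
    smul_eq_mul, mul_ite, mul_zero, Finset.sum_ite_eq', Finset.mem_univ, if_true]
  rw [← Finset.sum_mul]
  simp only [← Complex.ofReal_mul, ← Complex.ofReal_sum, hOO]
  split_ifs <;> simp

theorem svd_diagonalization_of_interaction_general {N M : ℕ}
    (σ : Fin (N ^ 2 - 1) → Matrix (Fin N) (Fin N) ℂ)
    (τ : Fin (M ^ 2 - 1) → Matrix (Fin M) (Fin M) ℂ)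
    (hσh : ∀ i, (σ i).IsHermitian) (hσt : ∀ i, (σ i).trace = 0)
    (hσo : ∀ i j, (σ i * σ j).trace = if i = j then 2 else 0)
    (hτh : ∀ k, (τ k).IsHermitian) (hτt : ∀ k, (τ k).trace = 0)
    (hτo : ∀ k l, (τ k * τ l).trace = if k = l then 2 else 0)
    (v : Fin (N ^ 2 - 1) → Fin (M ^ 2 - 1) → ℝ) :
    ∃ (σ' : Fin (N ^ 2 - 1) → Matrix (Fin N) (Fin N) ℂ)
      (τ' : Fin (M ^ 2 - 1) → Matrix (Fin M) (Fin M) ℂ)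
      (w : Fin (min N M ^ 2 - 1) → ℝ)
      (OA : Matrix (Fin (N ^ 2 - 1)) (Fin (N ^ 2 - 1)) ℝ)
      (OB : Matrix (Fin (M ^ 2 - 1)) (Fin (M ^ 2 - 1)) ℝ),
      OA ∈ Matrix.orthogonalGroup (Fin (N ^ 2 - 1)) ℝ ∧
      OB ∈ Matrix.orthogonalGroup (Fin (M ^ 2 - 1)) ℝ ∧
      (∀ i, σ' i = ∑ j, (OA i j : ℂ) • σ j) ∧
      (∀ i, τ' i = ∑ j, (OB i j : ℂ) • τ j) ∧
      (∀ i, (σ' i).IsHermitian) ∧ (∀ i, (σ' i).trace = 0) ∧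
      (∀ i j, (σ' i * σ' j).trace = if i = j then 2 else 0) ∧
      (∀ k, (τ' k).IsHermitian) ∧ (∀ k, (τ' k).trace = 0) ∧
      (∀ k l, (τ' k * τ' l).trace = if k = l then 2 else 0) ∧
      (∀ k, 0 ≤ w k) ∧
      ∑ i, ∑ j, (v i j : ℂ) • (σ i ⊗ₖ τ j) =
        ∑ k, (w k : ℂ) •
          (σ' (Fin.castLE (Nat.sub_le_sub_right (Nat.pow_le_pow_left (min_le_left N M) 2) 1) k) ⊗ₖ
           τ' (Fin.castLE (Nat.sub_le_sub_right (Nat.pow_le_pow_left (min_le_right N M) 2) 1) k)) := by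
  have hsq : Monotone fun k : ℕ => k ^ 2 - 1 := fun _ _ h =>
    Nat.sub_le_sub_right (Nat.pow_le_pow_left h 2) 1
  have hp : min (N ^ 2 - 1) (M ^ 2 - 1) ≤ min N M ^ 2 - 1 := hsq.map_min.ge
  obtain ⟨P, Q, w, hP, hQ, hw, hv⟩ := (Matrix.of v).exists_mem_orthogonalGroup_apply_eq_sum
    (hsq (min_le_left N M)) (hsq (min_le_right N M)) hp
  exact ⟨_, _, w, P, Q, hP, hQ, fun _ => rfl, fun _ => rfl,
    fun i => IsHermitian.sum_ofReal_smul hσh (P i), fun i => trace_sum_smul_eq_zero hσt _,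
    trace_mul_eq_ite_of_mem_orthogonalGroup hσo hP,
    fun k => IsHermitian.sum_ofReal_smul hτh (Q k), fun k => trace_sum_smul_eq_zero hτt _,
    trace_mul_eq_ite_of_mem_orthogonalGroup hτo hQ, hw,
    sum_smul_kronecker_eq_sum_smul_kronecker σ τ v w _ _ hv⟩

theorem svd_diagonalization_of_interaction {N M : ℕ} (hN : 2 ≤ N) (hM : 2 ≤ M)
    (σ : Fin (N ^ 2 - 1) → Matrix (Fin N) (Fin N) ℂ)
    (τ : Fin (M ^ 2 - 1) → Matrix (Fin M) (Fin M) ℂ)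
    (hσh : ∀ i, (σ i).IsHermitian) (hσt : ∀ i, (σ i).trace = 0)
    (hσo : ∀ i j, (σ i * σ j).trace = if i = j then 2 else 0)
    (hτh : ∀ k, (τ k).IsHermitian) (hτt : ∀ k, (τ k).trace = 0)
    (hτo : ∀ k l, (τ k * τ l).trace = if k = l then 2 else 0)
    (v : Fin (N ^ 2 - 1) → Fin (M ^ 2 - 1) → ℝ) :
    ∃ (σ' : Fin (N ^ 2 - 1) → Matrix (Fin N) (Fin N) ℂ)
      (τ' : Fin (M ^ 2 - 1) → Matrix (Fin M) (Fin M) ℂ)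
      (w : Fin (min N M ^ 2 - 1) → ℝ)
      (OA : Matrix (Fin (N ^ 2 - 1)) (Fin (N ^ 2 - 1)) ℝ)
      (OB : Matrix (Fin (M ^ 2 - 1)) (Fin (M ^ 2 - 1)) ℝ),
      OA ∈ Matrix.orthogonalGroup (Fin (N ^ 2 - 1)) ℝ ∧
      OB ∈ Matrix.orthogonalGroup (Fin (M ^ 2 - 1)) ℝ ∧
      (∀ i, σ' i = ∑ j, (OA i j : ℂ) • σ j) ∧
      (∀ i, τ' i = ∑ j, (OB i j : ℂ) • τ j) ∧
      (∀ i, (σ' i).IsHermitian) ∧ (∀ i, (σ' i).trace = 0) ∧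
      (∀ i j, (σ' i * σ' j).trace = if i = j then 2 else 0) ∧
      (∀ k, (τ' k).IsHermitian) ∧ (∀ k, (τ' k).trace = 0) ∧
      (∀ k l, (τ' k * τ' l).trace = if k = l then 2 else 0) ∧
      (∀ k, 0 ≤ w k) ∧
      ∑ i, ∑ j, (v i j : ℂ) • (σ i ⊗ₖ τ j) =
        ∑ k, (w k : ℂ) •
          (σ' (Fin.castLE (Nat.sub_le_sub_right (Nat.pow_le_pow_left (min_le_left N M) 2) 1) k) ⊗ₖ
           τ' (Fin.castLE (Nat.sub_le_sub_right (Nat.pow_le_pow_left (min_le_right N M) 2) 1) k)) :=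
  svd_diagonalization_of_interaction_general σ τ hσh hσt hσo hτh hτt hτo v
end
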